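/- Let n ≥ 2, let G be a K_3-saturated subgraph of the complete balanced tripartite graph K_3^n with partite sets V_1, V_2, V_3, let i ∈ {1,2,3}, and let v ∈ V_i be a vertex of degree d in G. Then the number of edges of G joining the two partite sets other than V_i is at least 2n − d. -/

import Mathlib

open SimpleGraph

/-- The complete balanced `k`-partite graph with partite sets `V_i = {i} × Fin n`. -/
def multipartite (k n : ℕ) : SimpleGraph (Fin k × Fin n) where
  Adj u w := u.1 ≠ w.1
  symm := by first | exact fun _ _ h => h.symm | exact ⟨fun _ _ h => h.symm⟩
  loopless := ⟨fun _ h => h rfl⟩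

/-- `J` is a `K_t`-saturated subgraph of `G`. -/
def IsSatIn {V : Type*} (t : ℕ) (J G : SimpleGraph V) : Prop :=
  J ≤ G ∧ J.CliqueFree t ∧
    ∀ u w : V, G.Adj u w → ¬ J.Adj u w →
      ¬ (J ⊔ SimpleGraph.fromEdgeSet {s(u, w)}).CliqueFree t

/-!
Every vertex `u` outside `V_i` that is not a neighbour of `v` has, by saturation, a common
neighbour `f u` with `v`. The edges `u (f u)` avoid `V_i` and are pairwise distinct, since `u`
is not a neighbour of `v` while `f u` is. There are `2n - d` such vertices `u`.
-/

namespace SimpleGraph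

variable {V : Type*} {J G : SimpleGraph V} {u w : V}

lemma CliqueFree.exists_adj_adj_of_not_cliqueFree_sup_edge (hJ : J.CliqueFree 3)
    (h : ¬ (J ⊔ edge u w).CliqueFree 3) : ∃ x, J.Adj u x ∧ J.Adj w x := by
  classical
  have huw : u ≠ w := by
    rintro rfl
    simp only [edge_self_eq_bot, sup_bot_eq] at h
    exact h hJ
  obtain ⟨t, ht⟩ := not_forall_not.1 h
  have ht' : (J ⊔ edge w u).IsNClique 3 t := edge_comm u w ▸ ht
  have hu := hJ.mem_of_sup_edge_isNClique ht
  have hw := hJ.mem_of_sup_edge_isNClique ht'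
  obtain ⟨x, hxt, hx⟩ := Finset.exists_mem_notMem_of_card_lt_card
    (s := {u, w}) (t := t) (by rw [ht.card_eq, Finset.card_pair huw]; decide)
  simp only [Finset.mem_insert, Finset.mem_singleton, not_or] at hx
  have adj_of_erase {a b : V} (hab : (J ⊔ edge a b).IsNClique 3 t) (ha : a ∈ t) (hxa : x ≠ a)
      {y : V} (hy : y ∈ t) (hya : y ≠ a) (hyx : y ≠ x) : J.Adj y x :=
    (hab.erase_of_sup_edge_of_mem ha).isClique (Finset.mem_erase.2 ⟨hya, hy⟩)
      (Finset.mem_erase.2 ⟨hxa, hxt⟩) hyx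
  exact ⟨x, adj_of_erase ht' hw hx.2 hu huw (Ne.symm hx.1),
    adj_of_erase ht hu hx.1 hw huw.symm (Ne.symm hx.2)⟩

lemma IsSatIn.exists_adj_adj (hJ : IsSatIn 3 J G) (hG : G.Adj u w) (hJuw : ¬ J.Adj u w) :
    ∃ x, J.Adj u x ∧ J.Adj w x :=
  hJ.2.1.exists_adj_adj_of_not_cliqueFree_sup_edge (hJ.2.2 u w hG hJuw)

lemma ncard_le_ncard_edgeSet_of_forall_exists_adj [Finite V] {A W : Set V}
    (hAW : Disjoint A W) (h : ∀ u ∈ A, ∃ w ∈ W, G.Adj u w) :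
    A.ncard ≤ {e ∈ G.edgeSet | ∀ x ∈ e, x ∈ A ∪ W}.ncard := by
  choose! f hfW hfadj using h
  refine Set.ncard_le_ncard_of_injOn (fun u => s(u, f u)) ?_ ?_ (Set.toFinite _)
  · intro u hu
    refine ⟨hfadj u hu, fun x hx => ?_⟩
    rcases Sym2.mem_iff.1 hx with rfl | rfl
    · exact Or.inl hu
    · exact Or.inr (hfW u hu)
  · intro a ha b hb hab
    rcases Sym2.eq_iff.1 hab with ⟨h, -⟩ | ⟨h, -⟩
    · exact h
    · exact absurd (h ▸ hfW b hb) (Set.disjoint_left.1 hAW ha)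

end SimpleGraph

lemma ncard_setOf_fst_ne (k n : ℕ) (i : Fin k) :
    {p : Fin k × Fin n | p.1 ≠ i}.ncard = (k - 1) * n := by
  have : {p : Fin k × Fin n | p.1 ≠ i} = {i}ᶜ ×ˢ Set.univ := by ext; simp
  rw [this, Set.ncard_prod, Set.ncard_univ, Nat.card_eq_fintype_card, Fintype.card_fin,
    Set.ncard_compl, Set.ncard_singleton, Nat.card_eq_fintype_card, Fintype.card_fin]

lemma neighborSet_subset_setOf_fst_ne {k n : ℕ} {G : SimpleGraph (Fin k × Fin n)}
    (hG : G ≤ multipartite k n) (v : Fin k × Fin n) :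
    G.neighborSet v ⊆ {p | p.1 ≠ v.1} :=
  fun _ hu => (hG hu).symm

theorem stmt_11_general (n : ℕ)
    (G : SimpleGraph (Fin 3 × Fin n))
    (hsat : IsSatIn 3 G (multipartite 3 n))
    (i : Fin 3) (v : Fin 3 × Fin n) (hv : v.1 = i)
    (d : ℕ) (hd : (G.neighborSet v).ncard = d) :
    2 * (n : ℤ) - d ≤ (({e ∈ G.edgeSet | ∀ x ∈ e, x.1 ≠ i}).ncard : ℤ) := by
  subst hv
  have hN := neighborSet_subset_setOf_fst_ne hsat.1 v
  have hcommon : ∀ u ∈ {p : Fin 3 × Fin n | p.1 ≠ v.1} \ G.neighborSet v,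
      ∃ w ∈ G.neighborSet v, G.Adj u w := fun u ⟨hu, hvu⟩ =>
    hsat.exists_adj_adj (Ne.symm hu) hvu
  have hcount := ncard_le_ncard_edgeSet_of_forall_exists_adj Set.disjoint_sdiff_left hcommon
  rw [Set.sdiff_union_of_subset hN, Set.ncard_sdiff hN, ncard_setOf_fst_ne, hd] at hcount
  have hdle : d ≤ 2 * n := hd ▸ ncard_setOf_fst_ne 3 n v.1 ▸ Set.ncard_le_ncard hN
  change 2 * n - d ≤ ({e ∈ G.edgeSet | ∀ x ∈ e, x.1 ≠ v.1}).ncard at hcount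
  omega

/-- In a `K_3`-saturated subgraph of `K_3^n`, if `v ∈ V_i` has degree `d`, then at least
`2n − d` edges join the two partite sets other than `V_i`. -/
theorem stmt_11 (n : ℕ) (hn : 2 ≤ n)
    (G : SimpleGraph (Fin 3 × Fin n))
    (hsat : IsSatIn 3 G (multipartite 3 n))
    (i : Fin 3) (v : Fin 3 × Fin n) (hv : v.1 = i)
    (d : ℕ) (hd : (G.neighborSet v).ncard = d) :
    2 * (n : ℤ) - d ≤ (({e ∈ G.edgeSet | ∀ x ∈ e, x.1 ≠ i}).ncard : ℤ) :=
  stmt_11_general n G hsat i v hv d hd
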